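/- For reduced p/q with q ≥ 2, let 0 < τ₋ < τ₊ < 1 be the two angles of exact period q under doubling σ(θ)=2θ mod 1 whose orbit intervals σ^j([τ₋,τ₊]), 0 ≤ j < q, are pairwise interiorly disjoint. Then 0 ∈ σ^{q−1}([τ₋,τ₊]) and 1/2 ∈ σ^{q−2}([τ₋,τ₊]). -/

import Mathlib

/-!
The open arcs `σ^j((τ₋, τ₊))`, `j < q`, are pairwise disjoint and `σ^j` stretches `(τ₋, τ₊)` by
`2^j`, so comparing lengths with the circle gives `(2^q - 1)(τ₊ - τ₋) ≤ 1`. Periodicity makes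
`(2^q - 1)τ₋` and `(2^q - 1)τ₊` integers, hence `(2^q - 1)(τ₊ - τ₋) = 1`, and the closed arcs
cover the circle up to a null set, hence entirely. The endpoints are periodic and nonzero, so they
never reach the fixed point `0`; thus `0` lies in an open arc, and since `σ` maps each open arc onto
the next one, only in the last, `σ^{q-1}((τ₋, τ₊))`. Its `σ`-preimage in `σ^{q-2}((τ₋, τ₊))` is
`0` or `1/2`, and `0` is ruled out by disjointness.
-/

/-- The doubling map `σ(θ) = 2θ mod 1` on the circle `ℝ/ℤ`. -/
noncomputable def dbl : AddCircle (1 : ℝ) → AddCircle (1 : ℝ) := fun x => x + x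

open Set MeasureTheory Function

theorem Function.IsPeriodicPt.eq_of_iterate_eq_isFixedPt {α : Type*} {f : α → α} {n j : ℕ}
    {x y : α} (hx : IsPeriodicPt f n x) (hy : IsFixedPt f y) (hj : j ≤ n) (h : f^[j] x = y) :
    x = y :=
  calc x = f^[n - j] (f^[j] x) := by rw [← iterate_add_apply, Nat.sub_add_cancel hj, hx.eq]
    _ = y := by rw [h, (hy.iterate _).eq]

theorem Finset.sum_le_of_sum_min_le {ι : Type*} {s : Finset ι} (hs : s.Nontrivial) {x : ι → ℝ}
    {c : ℝ} (hc : 0 < c) (hx : ∀ i ∈ s, 0 < x i) (h : ∑ i ∈ s, min (x i) c ≤ c) :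
    ∑ i ∈ s, x i ≤ c := by
  have hlt : ∀ i ∈ s, x i < c := fun i hi => by
    by_contra! hci
    obtain ⟨j, hj, hji⟩ := hs.exists_ne i
    have := Finset.single_lt_sum (f := fun k => min (x k) c) hji hi hj (lt_min (hx j hj) hc)
      fun k hk _ => le_min (hx k hk).le hc.le
    rw [min_eq_right hci] at this
    linarith
  rwa [Finset.sum_congr rfl fun i hi => min_eq_left (hlt i hi).le] at h

theorem MeasureTheory.Measure.dense_of_measure_univ_le {X : Type*} [TopologicalSpace X]
    [MeasurableSpace X] {μ : Measure X} [IsFiniteMeasure μ] [μ.IsOpenPosMeasure] {V : Set X}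
    (hV : MeasurableSet V) (h : μ univ ≤ μ V) : Dense V := by
  have : μ Vᶜ = 0 := by
    rw [measure_compl hV (measure_ne_top μ V), tsub_eq_zero_of_le h]
  exact μ.dense_of_ae (p := (· ∈ V)) this

theorem MeasureTheory.Measure.biUnion_eq_univ_of_le_sum {X ι : Type*} [TopologicalSpace X]
    [MeasurableSpace X] {μ : Measure X} [IsFiniteMeasure μ] [μ.IsOpenPosMeasure]
    {s : Finset ι} {U C : ι → Set X} (hU : ∀ i ∈ s, MeasurableSet (U i))
    (hC : ∀ i ∈ s, IsClosed (C i)) (hUC : ∀ i ∈ s, U i ⊆ C i)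
    (hdisj : (s : Set ι).PairwiseDisjoint U) (hμ : μ univ ≤ ∑ i ∈ s, μ (U i)) :
    ⋃ i ∈ s, C i = univ := by
  have hdense : Dense (⋃ i ∈ s, U i) :=
    μ.dense_of_measure_univ_le (s.measurableSet_biUnion hU)
      (by rwa [measure_biUnion_finset hdisj hU])
  refine univ_subset_iff.mp (hdense.closure_eq ▸ closure_minimal ?_ ?_)
  · exact iUnion₂_mono hUC
  · exact s.finite_toSet.isClosed_biUnion hC

namespace AddCircle

variable {T : ℝ} [hT : Fact (0 < T)]

theorem ofReal_min_le_volume_image_Ioo (a b : ℝ) :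
    ENNReal.ofReal (min (b - a) T) ≤ volume (((↑) : ℝ → AddCircle T) '' Ioo a b) := by
  rcases le_or_gt b a with hba | hab
  · simp [ENNReal.ofReal_eq_zero.mpr ((min_le_left _ _).trans (sub_nonpos.mpr hba))]
  have hmeas : MeasurableSet (((↑) : ℝ → AddCircle T) '' Ioo a b) :=
    (QuotientAddGroup.isOpenMap_coe _ isOpen_Ioo).measurableSet
  rw [add_projection_respects_measure T a hmeas]
  have hsub : Ioo a (min b (a + T)) ⊆
      QuotientAddGroup.mk ⁻¹' (((↑) : ℝ → AddCircle T) '' Ioo a b) ∩ Ioc a (a + T) :=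
    fun x hx => ⟨⟨x, ⟨hx.1, hx.2.trans_le (min_le_left _ _)⟩, rfl⟩,
      hx.1, (hx.2.trans_le (min_le_right _ _)).le⟩
  refine le_trans ?_ (measure_mono hsub)
  rw [Real.volume_Ioo, ← min_sub_sub_right, add_sub_cancel_left]

theorem sum_min_le_of_pairwiseDisjoint {ι : Type*} {s : Finset ι} {a b : ι → ℝ}
    (hab : ∀ i ∈ s, a i ≤ b i)
    (hdisj : (s : Set ι).PairwiseDisjoint fun i => ((↑) : ℝ → AddCircle T) '' Ioo (a i) (b i)) :
    ∑ i ∈ s, min (b i - a i) T ≤ T := by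
  have hmeas : ∀ i ∈ s, MeasurableSet (((↑) : ℝ → AddCircle T) '' Ioo (a i) (b i)) :=
    fun i _ => (QuotientAddGroup.isOpenMap_coe _ isOpen_Ioo).measurableSet
  rw [← ENNReal.ofReal_le_ofReal_iff hT.out.le, ENNReal.ofReal_sum_of_nonneg
    fun i hi => le_min (sub_nonneg.mpr (hab i hi)) hT.out.le]
  calc ∑ i ∈ s, ENNReal.ofReal (min (b i - a i) T)
      ≤ ∑ i ∈ s, volume (((↑) : ℝ → AddCircle T) '' Ioo (a i) (b i)) :=
        Finset.sum_le_sum fun i _ => ofReal_min_le_volume_image_Ioo _ _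
    _ = volume (⋃ i ∈ s, ((↑) : ℝ → AddCircle T) '' Ioo (a i) (b i)) :=
        (measure_biUnion_finset hdisj hmeas).symm
    _ ≤ ENNReal.ofReal T := AddCircle.measure_univ T ▸ measure_mono (subset_univ _)

theorem two_nsmul_eq_zero_iff {u : AddCircle T} :
    2 • u = 0 ↔ u = 0 ∨ u = ((T / 2 : ℝ) : AddCircle T) := by
  rw [AddCircle.nsmul_eq_zero_iff two_pos]
  constructor
  · rintro ⟨m, hm, rfl⟩
    interval_cases m <;> simp [inv_mul_eq_div]
  · rintro (rfl | rfl)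
    · exact ⟨0, two_pos, by simp⟩
    · exact ⟨1, one_lt_two, by simp [inv_mul_eq_div]⟩

end AddCircle

local notation "𝕋" => AddCircle (1 : ℝ)

theorem dbl_eq_two_nsmul (x : 𝕋) : dbl x = 2 • x := (two_nsmul x).symm

theorem isFixedPt_dbl_zero : IsFixedPt dbl 0 := add_zero 0

theorem dbl_iterate_coe (j : ℕ) (t : ℝ) : dbl^[j] (t : 𝕋) = ((2 ^ j * t : ℝ) : 𝕋) := by
  induction j generalizing t with
  | zero => simp
  | succ n ih =>
    rw [iterate_succ_apply', ih, dbl_eq_two_nsmul, ← AddCircle.coe_nsmul, nsmul_eq_mul, pow_succ]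
    congr 1
    ring

theorem dbl_eq_zero_iff {x : 𝕋} : dbl x = 0 ↔ x = 0 ∨ x = ((1 / 2 : ℝ) : 𝕋) := by
  rw [dbl_eq_two_nsmul, AddCircle.two_nsmul_eq_zero_iff]

theorem Function.IsPeriodicPt.exists_int_eq_two_pow_sub_one_mul {q : ℕ} {τ : ℝ}
    (h : IsPeriodicPt dbl q (τ : 𝕋)) : ∃ n : ℤ, (2 ^ q - 1) * τ = n := by
  have : ((2 ^ q * τ - τ : ℝ) : 𝕋) = 0 := by
    rw [AddCircle.coe_sub, ← dbl_iterate_coe, h.eq, sub_self]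
  obtain ⟨n, hn⟩ := (AddCircle.coe_eq_zero_iff 1).mp this
  exact ⟨n, by rw [sub_one_mul, ← hn, zsmul_one]⟩

theorem Function.IsPeriodicPt.dbl_iterate_ne_zero {q j : ℕ} {τ : ℝ}
    (h : IsPeriodicPt dbl q (τ : 𝕋)) (h0 : 0 < τ) (h1 : τ < 1) (hj : j ≤ q) :
    dbl^[j] (τ : 𝕋) ≠ 0 := fun hτ =>
  h0.ne' <| (AddCircle.coe_eq_zero_iff_of_mem_Ico ⟨h0.le, h1⟩).mp <|
    h.eq_of_iterate_eq_isFixedPt isFixedPt_dbl_zero hj hτ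

theorem dbl_iterate_image_coe (j : ℕ) (s : Set ℝ) :
    dbl^[j] '' (((↑) : ℝ → 𝕋) '' s) = (↑) '' ((2 ^ j * ·) '' s) := by
  simp only [image_image, dbl_iterate_coe]

theorem sum_two_pow_mul (q : ℕ) (x : ℝ) : ∑ j ∈ Finset.range q, 2 ^ j * x = (2 ^ q - 1) * x := by
  rw [← Finset.sum_mul, ← geom_sum_mul (2 : ℝ) q]
  norm_num

def orbitArc (a b : ℝ) (j : ℕ) : Set 𝕋 := dbl^[j] '' ((↑) '' Icc a b)

def openOrbitArc (a b : ℝ) (j : ℕ) : Set 𝕋 := dbl^[j] '' ((↑) '' Ioo a b)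

theorem openOrbitArc_eq (a b : ℝ) (j : ℕ) :
    openOrbitArc a b j = (↑) '' Ioo (2 ^ j * a) (2 ^ j * b) := by
  rw [openOrbitArc, dbl_iterate_image_coe, image_mul_left_Ioo (by positivity)]

theorem isOpen_openOrbitArc (a b : ℝ) (j : ℕ) : IsOpen (openOrbitArc a b j) :=
  openOrbitArc_eq a b j ▸ QuotientAddGroup.isOpenMap_coe _ isOpen_Ioo

theorem isClosed_orbitArc (a b : ℝ) (j : ℕ) : IsClosed (orbitArc a b j) := by
  rw [orbitArc, dbl_iterate_image_coe, image_mul_left_Icc' (by positivity)]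
  exact (isCompact_Icc.image (AddCircle.continuous_mk' 1)).isClosed

theorem openOrbitArc_subset_orbitArc (a b : ℝ) (j : ℕ) : openOrbitArc a b j ⊆ orbitArc a b j :=
  image_mono (image_mono Ioo_subset_Icc_self)

theorem openOrbitArc_subset_interior_orbitArc (a b : ℝ) (j : ℕ) :
    openOrbitArc a b j ⊆ interior (orbitArc a b j) :=
  interior_maximal (openOrbitArc_subset_orbitArc a b j) (isOpen_openOrbitArc a b j)

theorem orbitArc_subset_openOrbitArc_union (a b : ℝ) (j : ℕ) :
    orbitArc a b j ⊆ openOrbitArc a b j ∪ {dbl^[j] a, dbl^[j] b} := by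
  rintro _ ⟨_, ⟨t, ⟨hat, htb⟩, rfl⟩, rfl⟩
  rcases hat.eq_or_lt with rfl | hat
  · exact Or.inr (Or.inl rfl)
  rcases htb.eq_or_lt with rfl | htb
  · exact Or.inr (Or.inr rfl)
  exact Or.inl ⟨_, ⟨t, ⟨hat, htb⟩, rfl⟩, rfl⟩

theorem dbl_image_openOrbitArc (a b : ℝ) (j : ℕ) :
    dbl '' openOrbitArc a b j = openOrbitArc a b (j + 1) := by
  rw [openOrbitArc, openOrbitArc, iterate_succ', image_comp]

theorem pairwiseDisjoint_openOrbitArc {a b : ℝ} {q : ℕ} (hdisj : ∀ i j : ℕ, i < q → j < q → i ≠ j →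
      interior (orbitArc a b i) ∩ interior (orbitArc a b j) = ∅) :
    (Iio q).PairwiseDisjoint (openOrbitArc a b) := fun i hi j hj hij =>
  disjoint_iff_inter_eq_empty.mpr <| subset_empty_iff.mp <| hdisj i j hi hj hij ▸
    inter_subset_inter (openOrbitArc_subset_interior_orbitArc a b i)
      (openOrbitArc_subset_interior_orbitArc a b j)

section PeriodicOrbitArcs

variable {q : ℕ} {a b : ℝ}

theorem two_pow_sub_one_mul_sub_le_one (hq : 2 ≤ q) (hab : a < b)
    (hdisj : (Iio q).PairwiseDisjoint (openOrbitArc a b)) : (2 ^ q - 1) * (b - a) ≤ 1 := by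
  have hdisj' : (Finset.range q : Set ℕ).PairwiseDisjoint
      fun j => ((↑) : ℝ → 𝕋) '' Ioo (2 ^ j * a) (2 ^ j * b) := by
    rwa [Finset.coe_range, ← funext (openOrbitArc_eq a b)]
  have hmin := AddCircle.sum_min_le_of_pairwiseDisjoint (fun j _ => by gcongr) hdisj'
  simp only [← mul_sub] at hmin
  rw [← sum_two_pow_mul]
  exact Finset.sum_le_of_sum_min_le
    ⟨0, Finset.mem_range.mpr (by omega), 1, Finset.mem_range.mpr hq, zero_ne_one⟩ one_pos
    (fun j _ => by have := sub_pos.mpr hab; positivity) hmin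

theorem two_pow_sub_one_mul_sub_eq_one (hq : 2 ≤ q) (hab : a < b)
    (hdisj : (Iio q).PairwiseDisjoint (openOrbitArc a b))
    (ha : IsPeriodicPt dbl q (a : 𝕋)) (hb : IsPeriodicPt dbl q (b : 𝕋)) :
    (2 ^ q - 1) * (b - a) = 1 := by
  obtain ⟨m, hm⟩ := ha.exists_int_eq_two_pow_sub_one_mul
  obtain ⟨n, hn⟩ := hb.exists_int_eq_two_pow_sub_one_mul
  have hlen : (2 ^ q - 1) * (b - a) = ((n - m : ℤ) : ℝ) := by rw [mul_sub, hm, hn, Int.cast_sub]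
  have hpos : (0 : ℝ) < (n - m : ℤ) :=
    hlen ▸ mul_pos (sub_pos.mpr (one_lt_pow₀ one_lt_two (by omega))) (sub_pos.mpr hab)
  have hle : ((n - m : ℤ) : ℝ) ≤ 1 := hlen ▸ two_pow_sub_one_mul_sub_le_one hq hab hdisj
  have : n - m = 1 := by
    have := Int.cast_pos.mp hpos
    have : n - m ≤ 1 := by exact_mod_cast hle
    omega
  rw [hlen, this, Int.cast_one]

theorem iUnion_orbitArc_eq_univ (hq : 2 ≤ q) (hab : a < b)
    (hdisj : (Iio q).PairwiseDisjoint (openOrbitArc a b))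
    (ha : IsPeriodicPt dbl q (a : 𝕋)) (hb : IsPeriodicPt dbl q (b : 𝕋)) :
    ⋃ j ∈ Finset.range q, orbitArc a b j = univ := by
  have hlen := two_pow_sub_one_mul_sub_eq_one hq hab hdisj ha hb
  have hnonneg : ∀ j ∈ Finset.range q, 0 ≤ 2 ^ j * (b - a) := fun j _ => by
    have := sub_pos.mpr hab; positivity
  refine Measure.biUnion_eq_univ_of_le_sum (μ := volume)
    (fun j _ => (isOpen_openOrbitArc a b j).measurableSet) (fun j _ => isClosed_orbitArc a b j)
    (fun j _ => openOrbitArc_subset_orbitArc a b j) (by rwa [Finset.coe_range]) ?_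
  calc volume univ = ENNReal.ofReal (∑ j ∈ Finset.range q, 2 ^ j * (b - a)) := by
        rw [AddCircle.measure_univ, sum_two_pow_mul, hlen]
    _ = ∑ j ∈ Finset.range q, ENNReal.ofReal (min (2 ^ j * b - 2 ^ j * a) 1) := by
        rw [ENNReal.ofReal_sum_of_nonneg hnonneg]
        refine Finset.sum_congr rfl fun j hj => ?_
        rw [← mul_sub, min_eq_left (hlen ▸ sum_two_pow_mul q (b - a) ▸
          Finset.single_le_sum hnonneg hj)]
    _ ≤ ∑ j ∈ Finset.range q, volume (openOrbitArc a b j) := by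
        gcongr with j
        rw [openOrbitArc_eq]
        exact AddCircle.ofReal_min_le_volume_image_Ioo _ _

theorem zero_mem_openOrbitArc (hq : 2 ≤ q) (ha0 : 0 < a) (hab : a < b) (hb1 : b < 1)
    (hdisj : (Iio q).PairwiseDisjoint (openOrbitArc a b))
    (ha : IsPeriodicPt dbl q (a : 𝕋)) (hb : IsPeriodicPt dbl q (b : 𝕋)) :
    (0 : 𝕋) ∈ openOrbitArc a b (q - 1) := by
  have hcover : (0 : 𝕋) ∈ ⋃ j ∈ Finset.range q, orbitArc a b j := by
    rw [iUnion_orbitArc_eq_univ hq hab hdisj ha hb]; trivial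
  obtain ⟨j, hjq, hj⟩ := mem_iUnion₂.mp hcover
  rw [Finset.mem_range] at hjq
  have hj : (0 : 𝕋) ∈ openOrbitArc a b j := by
    rcases orbitArc_subset_openOrbitArc_union a b j hj with hj | hj | hj
    · exact hj
    · exact absurd hj.symm (ha.dbl_iterate_ne_zero ha0 (hab.trans hb1) hjq.le)
    · exact absurd hj.symm (hb.dbl_iterate_ne_zero (ha0.trans hab) hb1 hjq.le)
  obtain rfl : j = q - 1 := by
    by_contra hne
    have hnext : (0 : 𝕋) ∈ openOrbitArc a b (j + 1) :=
      dbl_image_openOrbitArc a b j ▸ ⟨0, hj, isFixedPt_dbl_zero⟩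
    exact disjoint_left.mp (hdisj hjq (show j + 1 < q by omega) (by omega)) hj hnext
  exact hj

end PeriodicOrbitArcs

theorem zero_and_half_in_orbit_intervals_general (q : ℕ) (hq : 2 ≤ q)
    (τm τp : ℝ) (h0 : 0 < τm) (h1 : τm < τp) (h2 : τp < 1)
    (hperm : dbl^[q] (τm : AddCircle (1 : ℝ)) = (τm : AddCircle (1 : ℝ)))
    (hperp : dbl^[q] (τp : AddCircle (1 : ℝ)) = (τp : AddCircle (1 : ℝ)))
    (I : Set (AddCircle (1 : ℝ)))
    (hI : I = (fun x : ℝ => (x : AddCircle (1 : ℝ))) '' Set.Icc τm τp)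
    (hdisj : ∀ i j : ℕ, i < q → j < q → i ≠ j →
      interior (dbl^[i] '' I) ∩ interior (dbl^[j] '' I) = ∅) :
    (0 : AddCircle (1 : ℝ)) ∈ dbl^[q - 1] '' I ∧
    (((1 : ℝ) / 2 : ℝ) : AddCircle (1 : ℝ)) ∈ dbl^[q - 2] '' I := by
  subst hI
  have hV := pairwiseDisjoint_openOrbitArc hdisj
  have hzero := zero_mem_openOrbitArc hq h0 h1 h2 hV hperm hperp
  refine ⟨openOrbitArc_subset_orbitArc _ _ _ hzero, ?_⟩
  have hpred : q - 1 = q - 2 + 1 := by omega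
  obtain ⟨x, hx, hx0⟩ : (0 : 𝕋) ∈ dbl '' openOrbitArc τm τp (q - 2) := by
    rwa [dbl_image_openOrbitArc, ← hpred]
  rcases dbl_eq_zero_iff.mp hx0 with rfl | rfl
  · exact absurd hzero (disjoint_left.mp (hV (show q - 2 < q by omega) (show q - 1 < q by omega)
      (by omega)) hx)
  · exact openOrbitArc_subset_orbitArc _ _ _ hx

/-- For reduced `p/q` with `q ≥ 2`, let `0 < τ₋ < τ₊ < 1` be angles of exact period
`q` under doubling whose orbit intervals `σ^j([τ₋,τ₊])`, `0 ≤ j < q`, are pairwise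
interiorly disjoint (with `σ^j` injective on `[τ₋,τ₊]` for `j < q−1`). Then
`0 ∈ σ^{q−1}([τ₋,τ₊])` and `1/2 ∈ σ^{q−2}([τ₋,τ₊])`. -/
theorem zero_and_half_in_orbit_intervals (p q : ℕ) (hq : 2 ≤ q)
    (hcop : Nat.Coprime p q) (hp0 : 0 < p) (hpq : p < q)
    (τm τp : ℝ) (h0 : 0 < τm) (h1 : τm < τp) (h2 : τp < 1)
    (hperm : dbl^[q] (τm : AddCircle (1 : ℝ)) = (τm : AddCircle (1 : ℝ)))
    (hperp : dbl^[q] (τp : AddCircle (1 : ℝ)) = (τp : AddCircle (1 : ℝ)))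
    (hexm : ∀ j : ℕ, 0 < j → j < q →
      dbl^[j] (τm : AddCircle (1 : ℝ)) ≠ (τm : AddCircle (1 : ℝ)))
    (hexp : ∀ j : ℕ, 0 < j → j < q →
      dbl^[j] (τp : AddCircle (1 : ℝ)) ≠ (τp : AddCircle (1 : ℝ)))
    (I : Set (AddCircle (1 : ℝ)))
    (hI : I = (fun x : ℝ => (x : AddCircle (1 : ℝ))) '' Set.Icc τm τp)
    (hdisj : ∀ i j : ℕ, i < q → j < q → i ≠ j →
      interior (dbl^[i] '' I) ∩ interior (dbl^[j] '' I) = ∅)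
    (hinj : ∀ j : ℕ, j < q - 1 → Set.InjOn (dbl^[j]) I) :
    (0 : AddCircle (1 : ℝ)) ∈ dbl^[q - 1] '' I ∧
    (((1 : ℝ) / 2 : ℝ) : AddCircle (1 : ℝ)) ∈ dbl^[q - 2] '' I :=
  zero_and_half_in_orbit_intervals_general q hq τm τp h0 h1 h2 hperm hperp I hI hdisj
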